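/- Let R be a Noetherian local ring with maximal ideal m, and I an R-ideal of analytic spread ℓ. Let f_1, …, f_{ℓ+s} be elements of I (s a positive integer), set a = (f_1, …, f_{ℓ−1}) and K = (f_1, …, f_{ℓ+s}), and let φ: F(K) → F(I) be the natural map of special fiber rings. Then I^n = (f_1, …, f_{ℓ−1})·I^{n−1} + (f_ℓ, …, f_{ℓ+s})^n for all n ≫ 0 if and only if coker(φ) is a finitely generated module over F(a) (acting through the natural maps F(a) → F(K) → F(I)). -/

import Mathlib

open IsLocalRing Polynomial

section CoreDefs

universe u v

variable {R : Type*} [CommRing R]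

/-- `J` is a reduction of `I`: `J ⊆ I` and `I^(r+1) = J·I^r` for some `r ≥ 0`. -/
def IsReduction (J I : Ideal R) : Prop :=
  J ≤ I ∧ ∃ r : ℕ, I ^ (r + 1) = J * I ^ r

/-- The core of an ideal: the intersection of all of its reductions. -/
def coreIdeal (I : Ideal R) : Ideal R :=
  sInf {J : Ideal R | IsReduction J I}

/-- A minimal reduction is a reduction minimal with respect to inclusion. -/
def IsMinimalReduction (J I : Ideal R) : Prop :=
  IsReduction J I ∧ ∀ J' : Ideal R, IsReduction J' I → J' ≤ J → J' = J

/-- The reduction number `r_J(I)`: the least `r` with `I^(r+1) = J·I^r`. -/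
noncomputable def reductionNumber (J I : Ideal R) : ℕ :=
  sInf {r : ℕ | I ^ (r + 1) = J * I ^ r}

/-- The height of an ideal: the infimum of the heights of the primes containing it. -/
noncomputable def idealHeight (I : Ideal R) : ℕ∞ :=
  ⨅ (p : PrimeSpectrum R) (_ : I ≤ p.asIdeal), Order.height p

/-- The minimal number of generators of an ideal. -/
noncomputable def muGen (I : Ideal R) : ℕ∞ :=
  sInf {n : ℕ∞ | ∃ s : Finset R, (s.card : ℕ∞) = n ∧ Ideal.span (s : Set R) = I}

/-- The condition `G_ℓ` on an ideal `I`. -/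
def HasGCondition (I : Ideal R) (ℓ : ℕ) : Prop :=
  ∀ (p : Ideal R) [p.IsPrime], I ≤ p →
    ringKrullDim (Localization.AtPrime p) < (ℓ : WithBot ℕ∞) →
    (muGen (I.map (algebraMap R (Localization.AtPrime p))) : WithBot ℕ∞) ≤
      ringKrullDim (Localization.AtPrime p)

/-- `depth M ≥ n` for a module `M` over a local ring `R`: there is an `M`-regular
sequence of length `n` inside the maximal ideal. -/
def HasDepthGE (R : Type u) [CommRing R] [IsLocalRing R] (M : Type v) [AddCommGroup M]
    [Module R M] (n : ℕ) : Prop :=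
  ∃ rs : List R, rs.length = n ∧ (∀ x ∈ rs, x ∈ maximalIdeal R) ∧
    RingTheory.Sequence.IsRegular M rs

/-- A (local) Cohen–Macaulay ring: a local ring possessing a regular sequence of
nonunits whose length is the Krull dimension. -/
def IsCMLocalRing (S : Type u) [CommRing S] : Prop :=
  IsLocalRing S ∧ ∃ rs : List S, (∀ x ∈ rs, ¬IsUnit x) ∧
    RingTheory.Sequence.IsRegular S rs ∧ ((rs.length : ℕ∞) : WithBot ℕ∞) = ringKrullDim S

/-- A Cohen–Macaulay ring: all localizations at maximal ideals are local CM rings. -/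
def IsCMRing (S : Type u) [CommRing S] : Prop :=
  ∀ (p : Ideal S) [p.IsMaximal], IsCMLocalRing (Localization.AtPrime p)

/-- A (local) Gorenstein ring: a CM local ring such that, after factoring out a maximal
regular sequence, the socle (the annihilator of the maximal ideal, i.e. of the ideal of
nonunits) is a nonzero principal ideal. -/
def IsGorensteinLocalRing (S : Type u) [CommRing S] : Prop :=
  IsLocalRing S ∧ ∃ rs : List S, (∀ x ∈ rs, ¬IsUnit x) ∧
    RingTheory.Sequence.IsRegular S rs ∧ ((rs.length : ℕ∞) : WithBot ℕ∞) = ringKrullDim S ∧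
    ∃ w : S ⧸ Ideal.span {x : S | x ∈ rs},
      Submodule.colon (⊥ : Ideal (S ⧸ Ideal.span {x : S | x ∈ rs}))
          (Ideal.span {u : S ⧸ Ideal.span {x : S | x ∈ rs} | ¬IsUnit u}) =
        Ideal.span {w} ∧ w ≠ 0

/-- A Gorenstein ring: all localizations at maximal ideals are local Gorenstein rings. -/
def IsGorensteinRing (S : Type u) [CommRing S] : Prop :=
  ∀ (p : Ideal S) [p.IsMaximal], IsGorensteinLocalRing (Localization.AtPrime p)

/-- A regular local ring: Noetherian local with `μ(max ideal) = dim`. -/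
def IsRegularLocalRing' (S : Type u) [CommRing S] : Prop :=
  IsLocalRing S ∧ IsNoetherianRing S ∧
    ((muGen (Ideal.span {u : S | ¬IsUnit u}) : ℕ∞) : WithBot ℕ∞) = ringKrullDim S

/-- Serre's condition `R₁`: the localization at every prime of height at most one
is a regular local ring. -/
def SerreR1 (S : Type u) [CommRing S] : Prop :=
  ∀ (p : Ideal S) [p.IsPrime], idealHeight p ≤ 1 →
    IsRegularLocalRing' (Localization.AtPrime p)

end CoreDefs



section FiberDefs

variable {R : Type*} [CommRing R]

theorem reesAlgebra_mono {K I : Ideal R} (h : K ≤ I) : reesAlgebra K ≤ reesAlgebra I := by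
  intro p hp
  rw [mem_reesAlgebra_iff] at *
  exact fun i => pow_le_pow_left' h i (hp i)

/-- The special fiber ring of `I` relative to the ideal `m` (for `m` the maximal ideal of a
local ring this is `F(I) = ⊕ₙ Iⁿ/mIⁿ`, realized as `R[It] ⊗ R/m`). -/
abbrev fiberRingAt (m I : Ideal R) : Type _ :=
  reesAlgebra I ⧸ (m.map (algebraMap R (reesAlgebra I)))

noncomputable instance (m I : Ideal R) : CommRing (fiberRingAt m I) :=
  Ideal.Quotient.commRing _

/-- The analytic spread `ℓ(I) = dim F(I)`. -/
noncomputable def analyticSpreadAt (m I : Ideal R) : WithBot ℕ∞ :=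
  ringKrullDim (fiberRingAt m I)

/-- The analytic spread of an ideal in a local ring. -/
noncomputable def analyticSpread (R : Type*) [CommRing R] [IsLocalRing R] (I : Ideal R) :
    WithBot ℕ∞ :=
  analyticSpreadAt (maximalIdeal R) I

/-- The natural map of special fiber rings `F(K) → F(I)` induced by an inclusion `K ⊆ I`. -/
noncomputable def fiberMapAt (m : Ideal R) {K I : Ideal R} (h : K ≤ I) :
    fiberRingAt m K →+* fiberRingAt m I :=
  Ideal.quotientMap (m.map (algebraMap R (reesAlgebra I)))
    (Subalgebra.inclusion (reesAlgebra_mono h)).toRingHom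
    (by
      rw [Ideal.map_le_iff_le_comap]
      intro x hx
      simp only [Ideal.mem_comap]
      have h1 : (Subalgebra.inclusion (reesAlgebra_mono h)).toRingHom
          ((algebraMap R (reesAlgebra K)) x) = algebraMap R (reesAlgebra I) x := rfl
      rw [h1]
      exact Ideal.mem_map_of_mem _ hx)

/-- `coker(g)` is a finitely generated module over `A`, where `A` acts via `f`.
(Here `g : B →+* C` and `f : A →+* C` is the composite `A → B → C`.) -/
def CokerFG {A B C : Type*} [CommRing A] [CommRing B] [CommRing C]
    (f : A →+* C) (g : B →+* C) : Prop :=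
  letI := f.toModule
  Module.Finite A (C ⧸ Submodule.span A (Set.range g))

/-- The dimension of `coker(g)` as a module over `A` (acting via `f`),
i.e. `dim A/ann_A(coker g)`. -/
noncomputable def cokerDim {A B C : Type*} [CommRing A] [CommRing B] [CommRing C]
    (f : A →+* C) (g : B →+* C) : WithBot ℕ∞ :=
  letI := f.toModule
  ringKrullDim (A ⧸ Module.annihilator A (C ⧸ Submodule.span A (Set.range g)))

theorem rees_map_mem {I c : Ideal R} {p : R[X]} (hp : p ∈ reesAlgebra I) :
    p.map (Ideal.Quotient.mk c) ∈ reesAlgebra (I.map (Ideal.Quotient.mk c)) := by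
  rw [mem_reesAlgebra_iff] at *
  intro i
  rw [Polynomial.coeff_map, ← Ideal.map_pow]
  exact Ideal.mem_map_of_mem _ (hp i)

/-- The map `R[It] → R̄[Ītt]` induced by the quotient `R → R̄ = R/c`. -/
noncomputable def reesQuotMap (I c : Ideal R) :
    reesAlgebra I →+* reesAlgebra (I.map (Ideal.Quotient.mk c)) :=
  (Polynomial.mapRingHom (Ideal.Quotient.mk c)).restrict (reesAlgebra I) _
    (fun _ hx => rees_map_mem hx)

/-- The natural map `F(I) → F(Ī)` of special fiber rings induced by `R → R̄ = R/c`. -/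
noncomputable def fiberPushMap (m I c : Ideal R) :
    fiberRingAt m I →+*
      fiberRingAt ((m.map (Ideal.Quotient.mk c))) (I.map (Ideal.Quotient.mk c)) :=
  Ideal.quotientMap _ (reesQuotMap I c)
    (by
      rw [Ideal.map_le_iff_le_comap]
      intro x hx
      simp only [Ideal.mem_comap]
      have h1 : reesQuotMap I c (algebraMap R (reesAlgebra I) x) =
          algebraMap _ _ (Ideal.Quotient.mk c x) := by
        apply Subtype.ext
        show (Polynomial.C x : R[X]).map (Ideal.Quotient.mk c) = Polynomial.C _
        simp
      rw [h1]
      exact Ideal.mem_map_of_mem _ (Ideal.mem_map_of_mem _ hx))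

/-- The degree-one element `x* ∈ [F(I)]₁` determined by `x ∈ I`. -/
noncomputable def xstar (m I : Ideal R) (x : R) (hx : x ∈ I) : fiberRingAt m I :=
  Ideal.Quotient.mk _ ⟨Polynomial.monomial 1 x, reesAlgebra.monomial_mem.mpr (by simpa using hx)⟩

/-- The natural map `F(I)/x*F(I) → F(Ī)`, where `Ī` is the image of `I` in `R̄ = R/(x)`. -/
noncomputable def fiberCollapseMap (m I : Ideal R) (x : R) (hx : x ∈ I) :
    (fiberRingAt m I ⧸ Ideal.span {xstar m I x hx}) →+*
      fiberRingAt (m.map (Ideal.Quotient.mk (Ideal.span {x})))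
        (I.map (Ideal.Quotient.mk (Ideal.span {x}))) :=
  Ideal.Quotient.lift _ (fiberPushMap m I (Ideal.span {x}))
    (by
      intro a ha
      have h2 : Ideal.span {xstar m I x hx} ≤
          RingHom.ker (fiberPushMap m I (Ideal.span {x})) := by
        rw [Ideal.span_le, Set.singleton_subset_iff, SetLike.mem_coe, RingHom.mem_ker,
          xstar, fiberPushMap, Ideal.quotientMap_mk]
        have hval : ∀ q : reesAlgebra I, (q : R[X]) = Polynomial.monomial 1 x →
            reesQuotMap I (Ideal.span {x}) q = 0 := by
          intro q hq
          apply Subtype.ext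
          show Polynomial.map (Ideal.Quotient.mk (Ideal.span {x})) (q : R[X]) = 0
          rw [hq, Polynomial.map_monomial]
          have hx0 : Ideal.Quotient.mk (Ideal.span {x}) x = 0 := by
            rw [Ideal.Quotient.eq_zero_iff_mem]
            exact Ideal.mem_span_singleton_self x
          rw [hx0, Polynomial.monomial_zero_right]
        rw [hval _ rfl, map_zero]
      exact h2 ha)

end FiberDefs

/-!
`F(I)` is spanned additively by the classes `[x tⁿ]` of monomials with `x ∈ Iⁿ`. If
`I^{n+1} = 𝔞Iⁿ + K^{n+1}` for `n ≥ N`, a monomial of degree `n + 1 > N` is an `F(𝔞)`-combination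
of monomials of degree `n` plus an element of the image of `F(K)`; so the cokernel is generated
by the monomials of degree `≤ N` on finite generating sets of the `Iⁿ`. Conversely, lift finitely
many generators of the cokernel to `R[It]`; beyond their maximal degree `N`, comparing
coefficients of degree `n + 1` gives `I^{n+1} ⊆ 𝔞Iⁿ + K^{n+1} + 𝔪I^{n+1}`, and Nakayama removes
`𝔪I^{n+1}`. Finally `K = 𝔞 + b` and `(𝔞 + b)^{n+1} ⊆ 𝔞Iⁿ + b^{n+1}`, so the decomposition may be
stated with `K` in place of `b`.
-/

theorem Module.finite_quotient_span_iff {A M : Type*} [CommRing A] [AddCommGroup M] [Module A M]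
    (s : Set M) :
    Module.Finite A (M ⧸ Submodule.span A s) ↔
      ∃ t : Finset M, Submodule.span A (s ∪ t) = ⊤ := by
  classical
  set S := Submodule.span A s
  have hmap (t : Set M) :
      Submodule.map S.mkQ (Submodule.span A (s ∪ t)) = Submodule.span A (S.mkQ '' t) := by
    rw [Submodule.map_span, Set.image_union, Submodule.span_union, Submodule.span_eq_bot.2,
      bot_sup_eq]
    rintro _ ⟨x, hx, rfl⟩
    exact (Submodule.Quotient.mk_eq_zero S).2 (Submodule.subset_span hx)
  rw [Module.finite_def]
  constructor
  · rintro ⟨u, hu⟩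
    choose lift hlift using S.mkQ_surjective
    refine ⟨u.image lift, ?_⟩
    have htop : Submodule.map S.mkQ (Submodule.span A (s ∪ ↑(u.image lift))) = ⊤ := by
      simp only [hmap, Finset.coe_image, ← Set.image_comp, Function.comp_def, hlift,
        Set.image_id', hu]
    have := congrArg (Submodule.comap S.mkQ) htop
    rwa [Submodule.comap_map_eq, Submodule.ker_mkQ, Submodule.comap_top,
      sup_eq_left.2 (Submodule.span_mono Set.subset_union_left)] at this
  · rintro ⟨t, ht⟩
    refine ⟨t.image S.mkQ, ?_⟩
    rw [Finset.coe_image, ← hmap, ht, Submodule.map_top, Submodule.range_mkQ]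

theorem Ideal.sup_pow_succ_le {R : Type*} [CommRing R] {a b I : Ideal R} (haI : a ≤ I)
    (hbI : b ≤ I) (n : ℕ) : (a ⊔ b) ^ (n + 1) ≤ a * I ^ n + b ^ (n + 1) := by
  induction n with
  | zero => simp
  | succ n ih =>
    have hbIn : b * I ^ n ≤ I ^ (n + 1) := pow_succ' I n ▸ Ideal.mul_mono_left hbI
    calc (a ⊔ b) ^ (n + 2) = a * (a ⊔ b) ^ (n + 1) + b * (a ⊔ b) ^ (n + 1) := by
          rw [pow_succ' _ (n + 1), ← Ideal.add_eq_sup, add_mul]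
      _ ≤ a * I ^ (n + 1) + b * (a * I ^ n + b ^ (n + 1)) :=
          add_le_add (Ideal.mul_mono_right (pow_le_pow_left' (sup_le haI hbI) _))
            (Ideal.mul_mono_right ih)
      _ = a * I ^ (n + 1) + a * (b * I ^ n) + b ^ (n + 2) := by ring
      _ ≤ a * I ^ (n + 1) + b ^ (n + 2) := by
          rw [Ideal.add_eq_sup, Ideal.add_eq_sup, Ideal.add_eq_sup,
            sup_eq_left.2 (Ideal.mul_mono_right hbIn)]

theorem Ideal.pow_succ_eq_mul_pow_add_pow_iff {R : Type*} [CommRing R] {a b I : Ideal R}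
    (haI : a ≤ I) (hbI : b ≤ I) (n : ℕ) :
    I ^ (n + 1) = a * I ^ n + b ^ (n + 1) ↔ I ^ (n + 1) ≤ a * I ^ n + (a ⊔ b) ^ (n + 1) := by
  refine ⟨fun h => h.le.trans (add_le_add le_rfl (pow_le_pow_left' le_sup_right _)),
    fun h => le_antisymm ?_ ?_⟩
  · calc I ^ (n + 1) ≤ a * I ^ n + (a * I ^ n + b ^ (n + 1)) :=
          h.trans (add_le_add le_rfl (Ideal.sup_pow_succ_le haI hbI n))
      _ = a * I ^ n + b ^ (n + 1) := by rw [← add_assoc, add_idem]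
  · rw [Ideal.add_eq_sup]
    exact sup_le ((Ideal.mul_mono_left haI).trans (pow_succ' I n).ge) (pow_le_pow_left' hbI _)

theorem coeff_mul_mem_of_mem_reesAlgebra {R : Type*} [CommRing R] {a I J : Ideal R} (haI : a ≤ I)
    {n : ℕ} (hJ : a * I ^ n ≤ J) {p q : R[X]} (hp : p ∈ reesAlgebra a) (hq : q ∈ reesAlgebra I)
    (hqJ : q.coeff (n + 1) ∈ J) : (p * q).coeff (n + 1) ∈ J := by
  rw [coeff_mul]
  refine sum_mem fun ⟨i, j⟩ hij => ?_
  rw [Finset.HasAntidiagonal.mem_antidiagonal] at hij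
  rcases i with _ | i
  · rw [zero_add] at hij
    exact hij ▸ J.mul_mem_left _ hqJ
  · refine hJ ?_
    have hpi : p.coeff (i + 1) ∈ a * I ^ i :=
      (pow_succ' a i).le.trans (Ideal.mul_mono_right (pow_le_pow_left' haI i)) (hp (i + 1))
    have : a * I ^ i * I ^ j = a * I ^ n := by
      rw [mul_assoc, ← pow_add]; congr 2; omega
    exact this ▸ Ideal.mul_mem_mul hpi (hq j)

section FiberMonomial

variable {R : Type*} [CommRing R] (m I : Ideal R)

noncomputable def fiberMonomial (n : ℕ) : ↥(I ^ n) →ₗ[R] fiberRingAt m I :=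
  (Ideal.Quotient.mkₐ R _).toLinearMap ∘ₗ
    ((monomial n).domRestrict (I ^ n)).codRestrict (reesAlgebra I).toSubmodule
      fun x => reesAlgebra.monomial_mem.mpr x.2

theorem fiberMonomial_apply (n : ℕ) (x : ↥(I ^ n)) :
    fiberMonomial m I n x =
      Ideal.Quotient.mk _ ⟨monomial n (x : R), reesAlgebra.monomial_mem.mpr x.2⟩ := rfl

theorem fiberMonomial_mul {p q n : ℕ} (h : p + q = n) (x : ↥(I ^ p)) (y : ↥(I ^ q)) :
    fiberMonomial m I p x * fiberMonomial m I q y =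
      fiberMonomial m I n ⟨x * y, h ▸ pow_add I p q ▸ Ideal.mul_mem_mul x.2 y.2⟩ := by
  subst h
  simp only [fiberMonomial_apply, ← map_mul]
  congr 1
  exact Subtype.ext (monomial_mul_monomial _ _ _ _)

theorem fiberMapAt_fiberMonomial {K : Ideal R} (h : K ≤ I) (n : ℕ) (x : ↥(K ^ n)) :
    fiberMapAt m h (fiberMonomial m K n x) =
      fiberMonomial m I n ⟨x, pow_le_pow_left' h n x.2⟩ := rfl

theorem fiberMapAt_algebraMap {K : Ideal R} (h : K ≤ I) (r : R) :
    fiberMapAt m h (algebraMap R _ r) = algebraMap R _ r := rfl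

theorem fiberMonomial_induction {motive : fiberRingAt m I → Prop} (zero : motive 0)
    (add : ∀ ξ η, motive ξ → motive η → motive (ξ + η))
    (monomial : ∀ n x, motive (fiberMonomial m I n x)) (ξ : fiberRingAt m I) : motive ξ := by
  classical
  obtain ⟨q, rfl⟩ := Ideal.Quotient.mk_surjective ξ
  have hq : q = ∑ i ∈ (q : R[X]).support, ⟨Polynomial.monomial i ((q : R[X]).coeff i),
      reesAlgebra.monomial_mem.mpr (q.2 i)⟩ := by
    apply Subtype.ext
    rw [AddSubmonoidClass.coe_finsetSum]
    exact (q : R[X]).as_sum_support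
  rw [hq, map_sum]
  exact Finset.sum_induction _ motive add zero fun i _ => monomial i ⟨_, q.2 i⟩

theorem coeff_mem_mul_pow_of_mem_map {q : reesAlgebra I}
    (hq : q ∈ m.map (algebraMap R (reesAlgebra I))) (n : ℕ) :
    (q : R[X]).coeff n ∈ m * I ^ n := by
  induction hq using Submodule.span_induction generalizing n with
  | mem x hx =>
    obtain ⟨r, hr, rfl⟩ := hx
    show (C r).coeff n ∈ m * I ^ n
    rw [coeff_C]
    split_ifs with hn
    · subst hn
      simpa using hr
    · exact zero_mem _
  | zero => simp
  | add x y _ _ hx hy => exact add_mem (hx n) (hy n)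
  | smul c x _ hx =>
    rw [smul_eq_mul, Subalgebra.coe_mul, coeff_mul]
    refine sum_mem fun p hp => ?_
    rw [← Finset.HasAntidiagonal.mem_antidiagonal.mp hp, pow_add, mul_left_comm]
    exact Ideal.mul_mem_mul (c.2 p.1) (hx p.2)

theorem coeff_sub_mem_of_mk_eq {q q' : reesAlgebra I}
    (h : Ideal.Quotient.mk (m.map (algebraMap R (reesAlgebra I))) q = Ideal.Quotient.mk _ q')
    (n : ℕ) : (q : R[X]).coeff n - (q' : R[X]).coeff n ∈ m * I ^ n := by
  rw [← coeff_sub]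
  exact coeff_mem_mul_pow_of_mem_map m I (Ideal.Quotient.eq.mp h) n

end FiberMonomial

section CokernelFinite

variable {R : Type*} [CommRing R] {m a K I : Ideal R}

theorem fiberMonomial_mem_of_span_eq_top (haI : a ≤ I) {n : ℕ} {S : Set ↥(I ^ n)}
    (hS : Submodule.span R S = ⊤) :
    letI := (fiberMapAt m haI).toModule
    ∀ P : Submodule (fiberRingAt m a) (fiberRingAt m I),
      (∀ x ∈ S, fiberMonomial m I n x ∈ P) → ∀ x, fiberMonomial m I n x ∈ P := by
  let := (fiberMapAt m haI).toModule
  intro P hSP x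
  induction (hS ▸ Submodule.mem_top : x ∈ Submodule.span R S) using Submodule.span_induction with
  | mem x hx => exact hSP x hx
  | zero => simp
  | add x y _ _ hx hy => simpa using P.add_mem hx hy
  | smul r x _ hx =>
    rw [map_smul, Algebra.smul_def, ← fiberMapAt_algebraMap m I haI]
    exact P.smul_mem (algebraMap R _ r) hx

theorem fiberMonomial_succ_mem (haI : a ≤ I) (hKI : K ≤ I) {n : ℕ}
    (hn : I ^ (n + 1) ≤ a * I ^ n + K ^ (n + 1)) :
    letI := (fiberMapAt m haI).toModule
    ∀ P : Submodule (fiberRingAt m a) (fiberRingAt m I),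
      Set.range (fiberMapAt m hKI) ⊆ P → (∀ x, fiberMonomial m I n x ∈ P) →
        ∀ x, fiberMonomial m I (n + 1) x ∈ P := by
  let := (fiberMapAt m haI).toModule
  intro P hKP hnP ⟨x, hx⟩
  have haIn : a * I ^ n ≤ I ^ (n + 1) := pow_succ' I n ▸ Ideal.mul_mono_left haI
  obtain ⟨y, hy, z, hz, rfl⟩ := Submodule.mem_sup.mp (hn hx)
  have hyI : y ∈ I ^ (n + 1) := haIn hy
  have hzI : z ∈ I ^ (n + 1) := pow_le_pow_left' hKI _ hz
  have hsplit : (⟨y + z, hx⟩ : ↥(I ^ (n + 1))) = ⟨y, hyI⟩ + ⟨z, hzI⟩ := rfl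
  rw [hsplit, map_add]
  refine P.add_mem ?_ (hKP ⟨fiberMonomial m K (n + 1) ⟨z, hz⟩, rfl⟩)
  clear hsplit hx
  induction hy using Submodule.mul_induction_on' with
  | mem_mul_mem c hc w hw =>
    have hmul := fiberMonomial_mul m I (add_comm 1 n) ⟨c, (pow_one I).symm ▸ haI hc⟩ ⟨w, hw⟩
    rw [← fiberMapAt_fiberMonomial m I haI 1 ⟨c, (pow_one a).symm ▸ hc⟩] at hmul
    rw [← hmul]
    exact P.smul_mem (fiberMonomial m a 1 _) (hnP _)
  | add y₁ hy₁ y₂ hy₂ h₁ h₂ =>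
    have hsplit : (⟨y₁ + y₂, hyI⟩ : ↥(I ^ (n + 1))) = ⟨y₁, haIn hy₁⟩ + ⟨y₂, haIn hy₂⟩ := rfl
    rw [hsplit, map_add]
    exact P.add_mem (h₁ _) (h₂ _)

theorem cokerFG_of_pow_le [IsNoetherianRing R] (haI : a ≤ I) (hKI : K ≤ I) {N : ℕ}
    (hN : ∀ n, N ≤ n → I ^ (n + 1) ≤ a * I ^ n + K ^ (n + 1)) :
    CokerFG (fiberMapAt m haI) (fiberMapAt m hKI) := by
  classical
  let := (fiberMapAt m haI).toModule
  choose S hS using fun n => (Module.Finite.fg_top : (⊤ : Submodule R ↥(I ^ n)).FG)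
  refine (Module.finite_quotient_span_iff _).2
    ⟨(Finset.range (N + 1)).biUnion fun n => (S n).image (fiberMonomial m I n), ?_⟩
  set P := Submodule.span (fiberRingAt m a) (Set.range (fiberMapAt m hKI) ∪
    ↑((Finset.range (N + 1)).biUnion fun n => (S n).image (fiberMonomial m I n)))
  have hlow : ∀ n ≤ N, ∀ x, fiberMonomial m I n x ∈ P := fun n hn =>
    fiberMonomial_mem_of_span_eq_top haI (hS n) P fun x hx =>
      Submodule.subset_span <| Or.inr <| Finset.mem_coe.2 <|
        Finset.mem_biUnion.2
          ⟨n, Finset.mem_range.2 (Nat.lt_succ_of_le hn), Finset.mem_image_of_mem _ hx⟩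
  have hmem : ∀ n x, fiberMonomial m I n x ∈ P := by
    intro n
    induction n with
    | zero => exact hlow 0 (Nat.zero_le N)
    | succ n ih =>
      by_cases hn : n + 1 ≤ N
      · exact hlow (n + 1) hn
      · exact fiberMonomial_succ_mem haI hKI (hN n (by omega)) P
          (Submodule.subset_span.trans' Set.subset_union_left) ih
  exact eq_top_iff.2 fun ξ _ =>
    fiberMonomial_induction m I P.zero_mem (fun _ _ => P.add_mem) hmem ξ

theorem exists_lift_coeff_mem_of_mem_span (haI : a ≤ I) (hKI : K ≤ I) {n : ℕ}
    {t : Set (fiberRingAt m I)}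
    (ht : ∀ ξ ∈ t, ∃ q : reesAlgebra I, Ideal.Quotient.mk _ q = ξ ∧ (q : R[X]).natDegree ≤ n) :
    letI := (fiberMapAt m haI).toModule
    ∀ ξ ∈ Submodule.span (fiberRingAt m a) (Set.range (fiberMapAt m hKI) ∪ t),
      ∃ q : reesAlgebra I, Ideal.Quotient.mk _ q = ξ ∧
        (q : R[X]).coeff (n + 1) ∈ a * I ^ n + K ^ (n + 1) := by
  let := (fiberMapAt m haI).toModule
  intro ξ hξ
  induction hξ using Submodule.span_induction with
  | mem ξ hξ =>
    rcases hξ with ⟨η, rfl⟩ | hξ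
    · obtain ⟨q, rfl⟩ := Ideal.Quotient.mk_surjective η
      exact ⟨⟨q, reesAlgebra_mono hKI q.2⟩, rfl, Ideal.mem_sup_right (q.2 (n + 1))⟩
    · obtain ⟨q, rfl, hq⟩ := ht ξ hξ
      exact ⟨q, rfl, by rw [coeff_eq_zero_of_natDegree_lt (by omega)]; exact zero_mem _⟩
  | zero => exact ⟨0, map_zero _, by simp⟩
  | add ξ η _ _ hξ hη =>
    obtain ⟨q, rfl, hq⟩ := hξ
    obtain ⟨q', rfl, hq'⟩ := hη
    exact ⟨q + q', map_add _ _ _, add_mem hq hq'⟩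
  | smul α ξ _ hξ =>
    obtain ⟨q, rfl, hq⟩ := hξ
    obtain ⟨p, rfl⟩ := Ideal.Quotient.mk_surjective α
    refine ⟨⟨p, reesAlgebra_mono haI p.2⟩ * q, ?_,
      coeff_mul_mem_of_mem_reesAlgebra haI le_sup_left p.2 q.2 hq⟩
    rw [map_mul]
    rfl

theorem exists_pow_le_of_cokerFG [IsNoetherianRing R] (hm : m ≤ Ideal.jacobson ⊥)
    (haI : a ≤ I) (hKI : K ≤ I) (h : CokerFG (fiberMapAt m haI) (fiberMapAt m hKI)) :
    ∃ N, ∀ n, N ≤ n → I ^ (n + 1) ≤ a * I ^ n + K ^ (n + 1) := by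
  let := (fiberMapAt m haI).toModule
  obtain ⟨t, ht⟩ := (Module.finite_quotient_span_iff _).1 h
  choose lift hlift using Ideal.Quotient.mk_surjective (I := m.map (algebraMap R (reesAlgebra I)))
  refine ⟨t.sup fun ξ => (lift ξ : R[X]).natDegree, fun n hn => ?_⟩
  refine Submodule.le_of_le_smul_of_le_jacobson_bot (IsNoetherian.noetherian _) hm fun x hx => ?_
  obtain ⟨q, hq, hqJ⟩ := exists_lift_coeff_mem_of_mem_span haI hKI
    (fun ξ hξ => ⟨lift ξ, hlift ξ, (Finset.le_sup hξ).trans hn⟩)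
    (fiberMonomial m I (n + 1) ⟨x, hx⟩) (ht ▸ Submodule.mem_top)
  rw [fiberMonomial_apply] at hq
  have hdiff := coeff_sub_mem_of_mk_eq m I hq.symm (n + 1)
  rw [coeff_monomial_same] at hdiff
  rw [← sub_add_cancel x ((q : R[X]).coeff (n + 1)), Ideal.smul_eq_mul]
  exact add_mem (Ideal.mem_sup_right hdiff) (Ideal.mem_sup_left hqJ)

theorem cokerFG_fiberMapAt_iff [IsNoetherianRing R] (hm : m ≤ Ideal.jacobson ⊥)
    (haI : a ≤ I) (hKI : K ≤ I) :
    (∃ N, ∀ n, N ≤ n → I ^ (n + 1) ≤ a * I ^ n + K ^ (n + 1)) ↔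
      CokerFG (fiberMapAt m haI) (fiberMapAt m hKI) :=
  ⟨fun ⟨_, hN⟩ => cokerFG_of_pow_le haI hKI hN, exists_pow_le_of_cokerFG hm haI hKI⟩

end CokernelFinite

theorem powers_decomposition_iff_cokernel_finite_general
    {R : Type*} [CommRing R] [IsNoetherianRing R] [IsLocalRing R]
    (I : Ideal R) (ℓ s : ℕ)
    (f : Fin (ℓ + s) → R)
    (a K b : Ideal R)
    (ha : a = Ideal.span {y : R | ∃ i : Fin (ℓ + s), (i : ℕ) < ℓ - 1 ∧ y = f i})
    (hb : b = Ideal.span {y : R | ∃ i : Fin (ℓ + s), ℓ - 1 ≤ (i : ℕ) ∧ y = f i})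
    (hK : K = Ideal.span (Set.range f))
    (haI : a ≤ I) (hKI : K ≤ I) :
    ((∃ N : ℕ, ∀ n : ℕ, N ≤ n → I ^ (n + 1) = a * I ^ n + b ^ (n + 1)) ↔
      CokerFG (fiberMapAt (IsLocalRing.maximalIdeal R) haI)
        (fiberMapAt (IsLocalRing.maximalIdeal R) hKI)) := by
  have hKab : K = a ⊔ b := by
    rw [hK, ha, hb, ← Ideal.span_union]
    congr 1
    ext y
    constructor
    · rintro ⟨i, rfl⟩
      exact (lt_or_ge (i : ℕ) (ℓ - 1)).imp (⟨i, ·, rfl⟩) (⟨i, ·, rfl⟩)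
    · rintro (⟨i, -, rfl⟩ | ⟨i, -, rfl⟩) <;> exact ⟨i, rfl⟩
  have hbI : b ≤ I := (hKab ▸ le_sup_right : b ≤ K).trans hKI
  rw [← cokerFG_fiberMapAt_iff (IsLocalRing.maximalIdeal_le_jacobson ⊥), hKab]
  simp only [Ideal.pow_succ_eq_mul_pow_add_pow_iff haI hbI]

/-- **Corollary.** Let `R` be a Noetherian local ring, `I` an ideal of analytic spread `ℓ`,
`f₁, …, f_{ℓ+s}` elements of `I`, `𝔞 = (f₁, …, f_{ℓ−1})`, `K = (f₁, …, f_{ℓ+s})`, and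
`φ : F(K) → F(I)` the natural map of special fiber rings. Then
`Iⁿ = (f₁, …, f_{ℓ−1})I^{n−1} + (f_ℓ, …, f_{ℓ+s})ⁿ` for all `n ≫ 0` iff `coker(φ)` is a
finite `F(𝔞)`-module. -/
theorem powers_decomposition_iff_cokernel_finite
    {R : Type*} [CommRing R] [IsNoetherianRing R] [IsLocalRing R]
    (I : Ideal R) (ℓ s : ℕ) (hs : 0 < s)
    (hl : analyticSpread R I = ((ℓ : ℕ∞) : WithBot ℕ∞))
    (f : Fin (ℓ + s) → R) (hf : ∀ i, f i ∈ I)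
    (a K b : Ideal R)
    (ha : a = Ideal.span {y : R | ∃ i : Fin (ℓ + s), (i : ℕ) < ℓ - 1 ∧ y = f i})
    (hb : b = Ideal.span {y : R | ∃ i : Fin (ℓ + s), ℓ - 1 ≤ (i : ℕ) ∧ y = f i})
    (hK : K = Ideal.span (Set.range f))
    (haI : a ≤ I) (hKI : K ≤ I) :
    ((∃ N : ℕ, ∀ n : ℕ, N ≤ n → I ^ (n + 1) = a * I ^ n + b ^ (n + 1)) ↔
      CokerFG (fiberMapAt (IsLocalRing.maximalIdeal R) haI)
        (fiberMapAt (IsLocalRing.maximalIdeal R) hKI)) :=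
  powers_decomposition_iff_cokernel_finite_general I ℓ s f a K b ha hb hK haI hKI
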